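/- arXiv:2307.15048 — 2 statements merged into one kernel-verified Lean document; each statement's English description precedes it below -/
import Mathlib

section
/- For every fixed integer r ≥ 2 there exist a function b : ℕ → ℕ with b(Δ) = Θ(log Δ / log r) and an integer Δ₀ such that every (r+1)-colorable graph G of maximum degree Δ ≥ Δ₀ is b(Δ)-IS-rich. -/
open Filter MeasureTheory

namespace RandomCorr

/-- A correspondence assignment for a graph `G`: a list assignment `L` together with,
for each edge, a partial matching between the colors of its endpoints,
encoded as a symmetric relation `M` supported on edges of `G`. -/
structure CorrAssignment {V : Type} (G : SimpleGraph V) where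
  L : V → Finset ℕ
  M : V → ℕ → V → ℕ → Prop
  symm : ∀ u i v j, M u i v j → M v j u i
  adj_of : ∀ u i v j, M u i v j → G.Adj u v
  mem_left : ∀ u i v j, M u i v j → i ∈ L u
  mem_right : ∀ u i v j, M u i v j → j ∈ L v
  matching : ∀ u i v j j', M u i v j → M u i v j' → j = j'

variable {V : Type}

/-- An `(L,M)`-coloring. -/
def CorrAssignment.IsColoring {G : SimpleGraph V} (C : CorrAssignment G) (φ : V → ℕ) : Prop :=
  (∀ v, φ v ∈ C.L v) ∧ ∀ u v, ¬ C.M u (φ u) v (φ v)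

/-- `(L,M)` is an `ℓ`-correspondence assignment. -/
def IsLAssignment {G : SimpleGraph V} (C : CorrAssignment G) (ℓ : ℕ) : Prop :=
  ∀ v, ℓ ≤ (C.L v).card

/-- The correspondence chromatic number of `G` is at most `ℓ`. -/
def corrChromAtMost (G : SimpleGraph V) (ℓ : ℕ) : Prop :=
  ∀ C : CorrAssignment G, IsLAssignment C ℓ → ∃ φ, C.IsColoring φ

/-- Maximum degree of a finite graph. -/
noncomputable def maxDeg [Fintype V] (G : SimpleGraph V) : ℕ :=
  Finset.univ.sup fun v => (G.neighborSet v).ncard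

/-- `binom(n, ≤ b) = ∑_{i=0}^{⌊b⌋} binom(n,i)`. -/
noncomputable def binomLe (n : ℕ) (b : ℝ) : ℕ :=
  ∑ i ∈ Finset.range (⌊b⌋₊ + 1), n.choose i

/-- The number of independent sets (including the empty set) of a subgraph `F`. -/
noncomputable def subIndepCount {W : Type} {H : SimpleGraph W} (F : H.Subgraph) : ℕ :=
  {S : Set W | S ⊆ F.verts ∧ ∀ a ∈ S, ∀ b ∈ S, ¬ F.Adj a b}.ncard

/-- A neighborhood subgraph: a subgraph whose vertex set is contained in the
neighborhood of some vertex. -/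
def IsNbrSubgraph {W : Type} {H : SimpleGraph W} (F : H.Subgraph) : Prop :=
  ∃ v, F.verts ⊆ H.neighborSet v

/-- `G` is `b`-IS-rich (with respect to maximum degree `Δ`): every `b`-large
neighborhood subgraph `F` satisfies `I(F) ≥ 2 · binom(|V(F)|, ≤ b)`. -/
def ISRich (G : SimpleGraph V) (b : ℝ) (Δ : ℕ) : Prop :=
  ∀ F : G.Subgraph, IsNbrSubgraph F →
    (Δ : ℝ) ^ ((1 : ℝ)/3) < (binomLe F.verts.ncard b : ℝ) →
    2 * binomLe F.verts.ncard b ≤ subIndepCount F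

/-- The cover graph of a correspondence assignment. -/
def coverGraph {G : SimpleGraph V} (C : CorrAssignment G) : SimpleGraph (V × ℕ) where
  Adj x y := C.M x.1 x.2 y.1 y.2
  symm := ⟨fun x y h => C.symm _ _ _ _ h⟩
  loopless := ⟨fun x h => (G.loopless.irrefl x.1) (C.adj_of _ _ _ _ h)⟩

/-- A correspondence assignment is `b`-IS-rich (with respect to `Δ`) if every `b`-large
neighborhood subgraph of its cover graph has at least `2 · binom(|V(F)|, ≤ b)`
independent sets. -/
def CorrAssignment.ISRich {G : SimpleGraph V} (C : CorrAssignment G) (b : ℝ) (Δ : ℕ) : Prop :=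
  ∀ F : (coverGraph C).Subgraph, IsNbrSubgraph F →
    (Δ : ℝ) ^ ((1 : ℝ)/3) < (binomLe F.verts.ncard b : ℝ) →
    2 * binomLe F.verts.ncard b ≤ subIndepCount F

/-- Bernoulli measure on `Bool` with success probability `p` (truncated to `[0,1]`). -/
noncomputable def bern (p : ℝ) : Measure Bool :=
  (PMF.bernoulli (min (Real.toNNReal p) 1) (min_le_right _ _)).toMeasure

/-- The Erdős–Rényi measure: each potential edge appears independently with
probability `p`. -/
noncomputable def erdosRenyi (n : ℕ) (p : ℝ) : Measure (Sym2 (Fin n) → Bool) :=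
  Measure.pi fun _ => bern p

/-- The graph determined by an edge-indicator function. -/
def graphOf {n : ℕ} (ω : Sym2 (Fin n) → Bool) : SimpleGraph (Fin n) where
  Adj u v := u ≠ v ∧ ω s(u, v) = true
  symm := by
    constructor
    intro u v h
    refine ⟨h.1.symm, ?_⟩
    rw [Sym2.eq_swap]
    exact h.2
  loopless := ⟨fun u h => h.1 rfl⟩

/-- `G` has a complete minor of order `k`. -/
def HasCompleteMinor (G : SimpleGraph V) (k : ℕ) : Prop :=
  ∃ B : Fin k → Set V,
    (∀ i, (B i).Nonempty) ∧
    (∀ i, (G.induce (B i)).Connected) ∧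
    (∀ i j, i ≠ j → Disjoint (B i) (B j)) ∧
    (∀ i j, i ≠ j → ∃ u ∈ B i, ∃ v ∈ B j, G.Adj u v)

/-- The Hadwiger number: the largest `k` such that `K_k` is a minor of `G`. -/
noncomputable def hadwigerNumber [Fintype V] (G : SimpleGraph V) : ℕ :=
  sSup {k | HasCompleteMinor G k}

/-- Independence number. -/
noncomputable def indepNum [Fintype V] (G : SimpleGraph V) : ℕ :=
  sSup {k | ∃ S : Finset V, S.card = k ∧ ∀ a ∈ S, ∀ b ∈ S, ¬ G.Adj a b}

/-- A partial `(L,M)`-coloring. -/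
def IsPartialColoring {G : SimpleGraph V} (C : CorrAssignment G) (φ : V → Option ℕ) : Prop :=
  (∀ v c, φ v = some c → c ∈ C.L v) ∧
  ∀ u v cu cv, φ u = some cu → φ v = some cv → ¬ C.M u cu v cv

/-- The number of colors available at `u` with respect to a partial coloring `φ`. -/
noncomputable def availCount {G : SimpleGraph V} (C : CorrAssignment G)
    (φ : V → Option ℕ) (u : V) : ℕ :=
  {c : ℕ | c ∈ C.L u ∧ ∀ v cv, φ v = some cv → ¬ C.M u c v cv}.ncard

/-- The event `A_u`: `u` is uncolored and fewer than `Δ^{7/12}` colors are available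
at `u`. -/
def EventA {G : SimpleGraph V} (C : CorrAssignment G) (Δ : ℕ) (u : V)
    (φ : V → Option ℕ) : Prop :=
  φ u = none ∧ (availCount C φ u : ℝ) < (Δ : ℝ) ^ ((7 : ℝ)/12)

/-- The number of independent sets of `F` of size at least `m`. -/
noncomputable def indepGeCount {W : Type} {H : SimpleGraph W} (F : H.Subgraph) (m : ℕ) : ℕ :=
  {S : Set W | S ⊆ F.verts ∧ (∀ a ∈ S, ∀ b ∈ S, ¬ F.Adj a b) ∧ m ≤ S.ncard}.ncard

/-- The median size `ᾱ(F)` of an independent set: the largest `m` such that at least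
half of the independent sets of `F` have size at least `m`. -/
noncomputable def medianIndep {W : Type} {H : SimpleGraph W} (F : H.Subgraph) : ℕ :=
  sSup {m : ℕ | subIndepCount F ≤ 2 * indepGeCount F m}

end RandomCorr

/-! If `F` lies in the neighbourhood of `v`, an `(r+1)`-colouring of `G` uses at most `r`
colours on `V(F)`, so some colour class `A ⊆ V(F)` has `n = |V(F)| ≤ r|A|`, and each of the
`2^|A|` subsets of `A` is independent in `F`. On the other side, for `0 < x ≤ 1` the binomial
theorem gives `binom(n, ≤ b) ≤ x^{-b} (1+x)^n ≤ exp(xn + b log(1/x))`; with `x = 1/(8r)`,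
`b log(8r) ≤ n/(8r)` and `n ≥ 4r` this yields `2 binom(n, ≤ b) ≤ 2^{n/r} ≤ 2^|A|`. A `b`-large
`F` has `Δ < 8^n`, so both constraints hold once `b(Δ) = ⌊log Δ / (24 r log 8r)⌋` and
`Δ ≥ 2^{12r}`. -/

open Finset

theorem eventually_floor_div_bounds {α : Type} {l : Filter α} {f : α → ℝ}
    (hf : Tendsto f l atTop) {K L : ℝ} (hK : 0 < K) (hL : 0 < L) :
    ∀ᶠ x in l, L / (2 * K) * (f x / L) ≤ ⌊f x / K⌋₊ ∧ (⌊f x / K⌋₊ : ℝ) ≤ L / K * (f x / L) := by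
  filter_upwards [hf.eventually_ge_atTop K] with x hx
  have hq : 1 ≤ f x / K := (one_le_div hK).mpr hx
  have hlow : f x / K / 2 ≤ ⌊f x / K⌋₊ := by
    have h1 : (1 : ℝ) ≤ ⌊f x / K⌋₊ := by exact_mod_cast Nat.one_le_floor_iff _ |>.mpr hq
    linarith [Nat.lt_floor_add_one (f x / K)]
  have hup : (⌊f x / K⌋₊ : ℝ) ≤ f x / K := Nat.floor_le (by linarith)
  constructor
  · calc L / (2 * K) * (f x / L) = f x / K / 2 := by field_simp
      _ ≤ _ := hlow
  · calc (⌊f x / K⌋₊ : ℝ) ≤ f x / K := hup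
      _ = L / K * (f x / L) := by field_simp

namespace RandomCorr

theorem binomLe_mul_pow_le (n : ℕ) (b : ℝ) {x : ℝ} (hx₀ : 0 ≤ x) (hx₁ : x ≤ 1) :
    (binomLe n b : ℝ) * x ^ ⌊b⌋₊ ≤ (1 + x) ^ n := by
  calc (binomLe n b : ℝ) * x ^ ⌊b⌋₊
      = ∑ i ∈ range (⌊b⌋₊ + 1), x ^ ⌊b⌋₊ * n.choose i := by
        rw [binomLe, Nat.cast_sum, sum_mul]; simp only [mul_comm]
    _ ≤ ∑ i ∈ range (⌊b⌋₊ + 1), x ^ i * n.choose i := by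
        refine sum_le_sum fun i hi => mul_le_mul_of_nonneg_right ?_ (by positivity)
        exact pow_le_pow_of_le_one hx₀ hx₁ (Nat.lt_succ_iff.mp (mem_range.mp hi))
    _ = ∑ i ∈ range (⌊b⌋₊ + 1) with i ≤ n, x ^ i * n.choose i := by
        refine (sum_filter_of_ne fun i _ hi => ?_).symm
        by_contra hin
        simp [Nat.choose_eq_zero_of_lt (not_le.mp hin)] at hi
    _ ≤ ∑ i ∈ range (n + 1), x ^ i * n.choose i := by
        refine sum_le_sum_of_subset_of_nonneg (fun i hi => ?_) (fun _ _ _ => by positivity)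
        simpa [Nat.lt_succ_iff] using (mem_filter.mp hi).2
    _ = (1 + x) ^ n := by simp [add_comm 1 x, add_pow]

theorem binomLe_le_two_pow (n : ℕ) (b : ℝ) : (binomLe n b : ℝ) ≤ 2 ^ n := by
  simpa [one_add_one_eq_two] using binomLe_mul_pow_le n b zero_le_one le_rfl

theorem binomLe_le_exp (n : ℕ) (b : ℝ) {x : ℝ} (hx₀ : 0 < x) (hx₁ : x ≤ 1) :
    (binomLe n b : ℝ) ≤ Real.exp (x * n + ⌊b⌋₊ * Real.log x⁻¹) := by
  have hpow : (1 + x) ^ n ≤ Real.exp (x * n) := by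
    rw [mul_comm, Real.exp_nat_mul]
    gcongr
    linarith [Real.add_one_le_exp x]
  have hmul := (binomLe_mul_pow_le n b hx₀.le hx₁).trans hpow
  rw [Real.exp_add, Real.exp_nat_mul, Real.exp_log (inv_pos.mpr hx₀), inv_pow,
    ← div_eq_mul_inv, le_div_iff₀ (by positivity)]
  exact hmul

theorem two_mul_binomLe_le_two_pow {r n a : ℕ} (b : ℝ) (hr : 0 < r) (hn : 4 * r ≤ n)
    (hna : n ≤ r * a) (hb : ⌊b⌋₊ * Real.log (8 * r) ≤ n / (8 * r)) :
    2 * binomLe n b ≤ 2 ^ a := by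
  have hr' : (1 : ℝ) ≤ r := by exact_mod_cast hr
  have hn' : 4 * (r : ℝ) ≤ n := by exact_mod_cast hn
  have hna' : (n : ℝ) / r ≤ a := by
    rw [div_le_iff₀ (by positivity)]; exact_mod_cast (mul_comm r a ▸ hna)
  have hbinom : (binomLe n b : ℝ) ≤ Real.exp (n / (4 * r)) := by
    refine (binomLe_le_exp n b (x := (8 * r)⁻¹) (by positivity)
      (inv_le_one_of_one_le₀ (by linarith))).trans (Real.exp_le_exp.mpr ?_)
    rw [inv_inv]
    calc (8 * (r : ℝ))⁻¹ * n + ⌊b⌋₊ * Real.log (8 * r) ≤ n / (8 * r) + n / (8 * r) := by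
          rw [inv_mul_eq_div]; linarith
      _ = n / (4 * r) := by field_simp; ring
  have htwo : (2 : ℝ) ≤ Real.exp (n / (4 * r)) := by
    calc (2 : ℝ) ≤ Real.exp 1 := by linarith [Real.add_one_le_exp 1]
      _ ≤ _ := Real.exp_le_exp.mpr ((one_le_div (by positivity)).mpr hn')
  have hlog2 : (1 : ℝ) / 2 < Real.log 2 := by linarith [Real.log_two_gt_d9]
  suffices (2 * binomLe n b : ℝ) ≤ 2 ^ a by exact_mod_cast this
  calc (2 * binomLe n b : ℝ) ≤ Real.exp (n / (4 * r)) * Real.exp (n / (4 * r)) := by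
        gcongr
    _ = Real.exp (n / r / 2) := by rw [← Real.exp_add]; congr 1; field_simp; ring
    _ ≤ Real.exp (a * Real.log 2) := Real.exp_le_exp.mpr (by nlinarith)
    _ = 2 ^ a := by rw [Real.exp_nat_mul, Real.exp_log two_pos]

theorem lt_eight_pow_of_rpow_lt_binomLe {Δ n : ℕ} {b : ℝ}
    (h : (Δ : ℝ) ^ ((1 : ℝ) / 3) < binomLe n b) : Δ < 8 ^ n := by
  have h' : (Δ : ℝ) ^ (3 : ℝ)⁻¹ < 2 ^ n := by
    simpa [one_div] using h.trans_le (binomLe_le_two_pow n b)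
  rw [Real.rpow_inv_lt_iff_of_pos (by positivity) (by positivity) three_pos] at h'
  have h8 : ((2 : ℝ) ^ n) ^ (3 : ℝ) = ((8 ^ n : ℕ) : ℝ) := by
    rw [show (3 : ℝ) = (3 : ℕ) by norm_num, Real.rpow_natCast, ← pow_mul, mul_comm, pow_mul]
    norm_num
  exact_mod_cast h'.trans_eq h8

theorem floor_log_div_mul_log_le {Δ n r : ℕ} (hr : 0 < r) (hΔ : Δ < 8 ^ n) :
    ⌊Real.log Δ / (24 * r * Real.log (8 * r))⌋₊ * Real.log (8 * r) ≤ n / (8 * r) := by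
  have hr' : (1 : ℝ) ≤ r := by exact_mod_cast hr
  have hlog8r : 0 < Real.log (8 * r) := Real.log_pos (by linarith)
  have hlogΔ : Real.log Δ ≤ 3 * Real.log 2 * n := by
    rcases Nat.eq_zero_or_pos Δ with rfl | hΔ₀
    · rw [Nat.cast_zero, Real.log_zero]; positivity
    calc Real.log Δ ≤ Real.log ((2 ^ 3 : ℝ) ^ n) :=
          Real.log_le_log (by exact_mod_cast hΔ₀) (by exact_mod_cast hΔ.le)
      _ = 3 * Real.log 2 * n := by rw [Real.log_pow, Real.log_pow]; push_cast; ring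
  calc (⌊Real.log Δ / (24 * r * Real.log (8 * r))⌋₊ : ℝ) * Real.log (8 * r)
      ≤ Real.log Δ / (24 * r * Real.log (8 * r)) * Real.log (8 * r) := by
        gcongr
        exact Nat.floor_le (by have := Real.log_natCast_nonneg Δ; positivity)
    _ = Real.log Δ / (24 * r) := by rw [div_mul_eq_mul_div, mul_div_mul_right _ _ hlog8r.ne']
    _ ≤ 3 * n / (24 * r) := by gcongr; nlinarith [Real.log_two_lt_d9]
    _ = n / (8 * r) := by field_simp; ring

theorem two_pow_card_le_subIndepCount {W : Type} [Finite W] {H : SimpleGraph W}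
    (F : H.Subgraph) {A : Finset W} (hAF : ↑A ⊆ F.verts) (hA : H.IsIndepSet A) :
    2 ^ A.card ≤ subIndepCount F := by
  have hsub : (fun S : Finset W => (S : Set W)) '' ↑A.powerset ⊆
      {S : Set W | S ⊆ F.verts ∧ ∀ a ∈ S, ∀ b ∈ S, ¬ F.Adj a b} := by
    rintro _ ⟨S, hS, rfl⟩
    have hSA : (S : Set W) ⊆ A := by simpa using hS
    exact ⟨hSA.trans hAF, fun a ha b hb hab =>
      hA (hSA ha) (hSA hb) (F.adj_sub hab).ne (F.adj_sub hab)⟩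
  calc 2 ^ A.card = ((fun S : Finset W => (S : Set W)) '' ↑A.powerset).ncard := by
        rw [Set.ncard_image_of_injective _ Finset.coe_injective, Set.ncard_coe_finset,
          card_powerset]
    _ ≤ subIndepCount F := Set.ncard_le_ncard hsub (Set.toFinite _)

end RandomCorr

theorem SimpleGraph.Colorable.exists_isIndepSet_of_subset_neighborSet {V : Type}
    {G : SimpleGraph V} {r : ℕ} (hG : G.Colorable (r + 1)) {v : V} {s : Finset V}
    (hs : ↑s ⊆ G.neighborSet v) : ∃ A ⊆ s, G.IsIndepSet A ∧ s.card ≤ r * A.card := by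
  classical
  obtain ⟨C⟩ := hG
  set t := univ.erase (C v)
  have hmaps : ∀ u ∈ s, C u ∈ t := fun u hu =>
    mem_erase.mpr ⟨(C.valid (hs hu)).symm, mem_univ _⟩
  have hcard := card_le_mul_card_image_of_maps_to hmaps _ fun c hc =>
    le_sup (f := fun c => #{u ∈ s | C u = c}) hc
  rw [card_erase_of_mem (mem_univ _), card_univ, Fintype.card_fin, Nat.add_sub_cancel,
    mul_comm] at hcard
  rcases t.eq_empty_or_nonempty with ht | ht
  · exact ⟨∅, empty_subset _, by simp, by simpa [ht] using hcard⟩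
  obtain ⟨c, -, hc⟩ := exists_mem_eq_sup t ht fun c => #{u ∈ s | C u = c}
  refine ⟨{u ∈ s | C u = c}, filter_subset _ _, fun a ha b hb _ hab => ?_, hc ▸ hcard⟩
  simp only [coe_filter, Set.mem_ofPred_eq] at ha hb
  exact C.valid hab (ha.2.trans hb.2.symm)

open RandomCorr

/-- For every fixed `r ≥ 2` there are `b : ℕ → ℕ` with
`b(Δ) = Θ(log Δ / log r)` and `Δ₀` such that every `(r+1)`-colorable graph of maximum
degree `Δ ≥ Δ₀` is `b(Δ)`-IS-rich. -/
theorem colorable_graph_isRich (r : ℕ) (hr : 2 ≤ r) :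
    ∃ b : ℕ → ℕ,
      (∃ c₁ c₂ : ℝ, 0 < c₁ ∧ 0 < c₂ ∧ ∀ᶠ Δ : ℕ in Filter.atTop,
        c₁ * (Real.log Δ / Real.log r) ≤ (b Δ : ℝ) ∧
        (b Δ : ℝ) ≤ c₂ * (Real.log Δ / Real.log r)) ∧
      ∃ Δ₀ : ℕ, ∀ (V : Type) [Fintype V] (G : SimpleGraph V) (Δ : ℕ),
        RandomCorr.maxDeg G = Δ → Δ₀ ≤ Δ → G.Colorable (r + 1) →
        RandomCorr.ISRich G (b Δ : ℝ) Δ := by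
  have hr₀ : 0 < r := by omega
  have hlogr : 0 < Real.log r := Real.log_pos (by exact_mod_cast hr)
  set K := 24 * r * Real.log (8 * r)
  have hK : 0 < K := by
    have : (1 : ℝ) ≤ r := by exact_mod_cast hr₀
    have := Real.log_pos (show (1 : ℝ) < 8 * r by linarith)
    positivity
  refine ⟨fun Δ => ⌊Real.log Δ / K⌋₊, ⟨_, _, by positivity, by positivity,
    eventually_floor_div_bounds (Real.tendsto_log_atTop.comp tendsto_natCast_atTop_atTop)
      hK hlogr⟩, 2 ^ (12 * r), ?_⟩
  intro V _ G Δ _ hΔ₀ hG F ⟨v, hv⟩ hlarge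
  classical
  have hΔ := lt_eight_pow_of_rpow_lt_binomLe hlarge
  have hn : 4 * r ≤ F.verts.ncard := by
    have : 2 ^ (12 * r) < 2 ^ (3 * F.verts.ncard) := by
      rw [pow_mul 2 3]; exact hΔ₀.trans_lt hΔ
    have := (Nat.pow_lt_pow_iff_right (by norm_num)).mp this
    omega
  obtain ⟨A, hAF, hA, hcard⟩ := hG.exists_isIndepSet_of_subset_neighborSet
    (s := F.verts.toFinset) (by simpa using hv)
  calc 2 * binomLe F.verts.ncard ⌊Real.log Δ / K⌋₊
      ≤ 2 ^ A.card := two_mul_binomLe_le_two_pow _ hr₀ hn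
        (by simpa [Set.ncard_eq_toFinset_card'] using hcard)
        (by simpa using floor_log_div_mul_log_le hr₀ hΔ)
    _ ≤ subIndepCount F :=
        two_pow_card_le_subIndepCount F (by simpa using coe_subset.mpr hAF) hA
end

section
/- The following holds for every sufficiently large Δ. Let G be a graph, let (L,M) be a correspondence assignment for G, let u be a vertex of G, and let S be a set of neighbors of u of size s = ⌈Δ^{7/12}⌉. Let φ₀ be a partial (L,M)-coloring of G − N[u]. If φ is a uniformly randomly chosen partial (L,M)-coloring of G, then the conditional probability, given that the restriction of φ to G − N[u] equals φ₀, of the event B_S (that S ∩ dom(φ) = ∅ and for every x ∈ S the event A_x is false, where A_x is the event that x ∉ dom(φ) and fewer than Δ^{7/12} colors are available at x) is less than 1/(8Δ³·binom(Δ,s)). -/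
open Filter MeasureTheory

/-!
If `φ` lies in `B_S`, every vertex of `S` is uncoloured and has at least `s` available colours.
Since a coloured vertex blocks at most one colour at each neighbour (the correspondences are
matchings), `S` can then be coloured greedily in at least `s!` ways; these extensions still
agree with `φ₀` off `N[u]`, and different `φ ∈ B_S` have disjoint sets of extensions. Hence
the conditional probability of `B_S` is at most `1 / s!`, and `8Δ³·C(Δ,s) < s!` follows from
`C(Δ,s) ≤ Δ^s / s!`, `s! ≥ (s/3)^s` and `s² ≥ Δ^{7/6}`.
-/

open scoped Function

theorem Nat.div_three_pow_le_factorial (n : ℕ) : ((n : ℝ) / 3) ^ n ≤ n.factorial := by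
  have hexp : (n : ℝ) ^ n / n.factorial ≤ 3 ^ n :=
    calc (n : ℝ) ^ n / n.factorial ≤ Real.exp n :=
          Real.pow_div_factorial_le_exp _ n.cast_nonneg n
      _ = Real.exp 1 ^ n := by rw [← Real.exp_nat_mul, mul_one]
      _ ≤ 3 ^ n := pow_le_pow_left₀ (Real.exp_pos 1).le Real.exp_one_lt_three.le n
  rw [div_pow, div_le_iff₀ (by positivity)]
  rw [div_le_iff₀ (by positivity)] at hexp
  linarith

theorem eight_mul_pow_three_mul_choose_lt_factorial {n s : ℕ} {t : ℝ} (ht : 9 ≤ t)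
    (hn : (n : ℝ) = t ^ 12) (hs : t ^ 7 ≤ s) : 8 * n ^ 3 * n.choose s < s.factorial := by
  have ht0 : 0 < t := by linarith
  have hs37 : 37 ≤ s := by
    have : (37 : ℝ) ≤ t ^ 7 := by nlinarith [pow_le_pow_left₀ (by norm_num) ht 7]
    exact_mod_cast this.trans hs
  have hfact : (0 : ℝ) < s.factorial := by positivity
  have hn0 : (0 : ℝ) < n := by rw [hn]; positivity
  have hbase : (n : ℝ) * t ≤ (s : ℝ) ^ 2 / 9 := by
    rw [hn, le_div_iff₀ (by norm_num)]
    calc t ^ 12 * t * 9 ≤ t ^ 12 * t * t := by gcongr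
      _ = (t ^ 7) ^ 2 := by ring
      _ ≤ (s : ℝ) ^ 2 := by gcongr
  have hsmall : 8 * (n : ℝ) ^ 3 < t ^ s :=
    calc 8 * (n : ℝ) ^ 3 < t * t ^ 36 := by
          rw [hn]; nlinarith [pow_pos ht0 36]
      _ = t ^ 37 := by ring
      _ ≤ t ^ s := pow_le_pow_right₀ (by linarith) hs37
  have hsq : 8 * (n : ℝ) ^ 3 * n ^ s < (s.factorial : ℝ) ^ 2 :=
    calc 8 * (n : ℝ) ^ 3 * n ^ s < t ^ s * n ^ s := by gcongr
      _ = (n * t) ^ s := by ring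
      _ ≤ ((s : ℝ) ^ 2 / 9) ^ s := by gcongr
      _ = (((s : ℝ) / 3) ^ s) ^ 2 := by rw [← pow_mul, mul_comm, pow_mul]; ring
      _ ≤ (s.factorial : ℝ) ^ 2 := by gcongr; exact Nat.div_three_pow_le_factorial s
  have hchoose : (n.choose s : ℝ) ≤ (n : ℝ) ^ s / s.factorial := Nat.choose_le_pow_div s n
  have : (8 * n ^ 3 * n.choose s : ℝ) < s.factorial :=
    calc (8 * n ^ 3 * n.choose s : ℝ) ≤ 8 * n ^ 3 * (n ^ s / s.factorial) := by gcongr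
      _ = 8 * n ^ 3 * n ^ s / s.factorial := by ring
      _ < (s.factorial : ℝ) ^ 2 / s.factorial := by gcongr
      _ = s.factorial := by field_simp
  exact_mod_cast this

theorem eight_mul_pow_three_mul_choose_ceil_lt_factorial {Δ : ℕ} (hΔ : 9 ^ 12 ≤ Δ) :
    8 * Δ ^ 3 * Δ.choose ⌈(Δ : ℝ) ^ ((7 : ℝ) / 12)⌉₊ <
      ⌈(Δ : ℝ) ^ ((7 : ℝ) / 12)⌉₊.factorial := by
  have hΔ0 : (0 : ℝ) ≤ Δ := Δ.cast_nonneg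
  refine eight_mul_pow_three_mul_choose_lt_factorial
    (t := (Δ : ℝ) ^ ((1 : ℝ) / 12)) ?_ ?_ ?_
  · calc (9 : ℝ) = ((9 : ℝ) ^ 12) ^ ((1 : ℝ) / 12) := by
          rw [← Real.rpow_natCast, ← Real.rpow_mul (by norm_num)]; norm_num
      _ ≤ (Δ : ℝ) ^ ((1 : ℝ) / 12) := by gcongr; exact_mod_cast hΔ
  · rw [← Real.rpow_natCast, ← Real.rpow_mul hΔ0]; norm_num
  · rw [← Real.rpow_natCast, ← Real.rpow_mul hΔ0]
    exact (le_of_eq (by norm_num)).trans (Nat.le_ceil _)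

theorem Set.ncard_mul_le_ncard_of_pairwiseDisjoint {ι α : Type*} {t : Set ι} {s : ι → Set α}
    {A : Set α} {m : ℕ} (hA : A.Finite) (hsA : ∀ i ∈ t, s i ⊆ A)
    (hdisj : t.PairwiseDisjoint s) (hm : ∀ i ∈ t, m ≤ (s i).ncard) :
    t.ncard * m ≤ A.ncard := by
  rcases t.finite_or_infinite with ht | ht
  · calc t.ncard * m = ht.toFinset.card * m := by rw [Set.ncard_eq_toFinset_card t ht]
      _ ≤ ∑ i ∈ ht.toFinset, (s i).ncard :=
          Finset.card_nsmul_le_sum _ _ _ fun i hi => hm i (ht.mem_toFinset.mp hi)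
      _ = (⋃ i ∈ t, s i).ncard := by
          rw [ht.ncard_biUnion (fun i hi => hA.subset (hsA i hi)) hdisj,
            finsum_mem_eq_finite_toFinset_sum _ ht]
      _ ≤ A.ncard := Set.ncard_le_ncard (Set.iUnion₂_subset hsA) hA
  · simp [ht.ncard]

namespace RandomCorr

variable {V : Type} {G : SimpleGraph V} (C : CorrAssignment G)

-- `availCount C φ x` unfolds to `(availColors C φ x).ncard`.
def availColors (φ : V → Option ℕ) (x : V) : Set ℕ :=
  {c | c ∈ C.L x ∧ ∀ v cv, φ v = some cv → ¬ C.M x c v cv}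

def extensionsOn (φ : V → Option ℕ) (T : Finset V) : Set (V → Option ℕ) :=
  {ψ | IsPartialColoring C ψ ∧ (∀ v ∉ T, ψ v = φ v) ∧ ∀ x ∈ T, ψ x ≠ none}

theorem setOf_isPartialColoring_finite [Finite V] : {φ | IsPartialColoring C φ}.Finite := by
  refine (Set.Finite.pi fun v => ((C.L v).finite_toSet.image some).insert none).subset ?_
  intro φ hφ v _
  cases hv : φ v with
  | none => exact Set.mem_insert _ _
  | some c => exact Set.mem_insert_of_mem _ ⟨c, hφ.1 v c hv, rfl⟩

theorem extensionsOn_finite [Finite V] (φ : V → Option ℕ) (T : Finset V) :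
    (extensionsOn C φ T).Finite :=
  (setOf_isPartialColoring_finite C).subset fun _ hψ => hψ.1

theorem availCount_le_availCount_update_add_one [DecidableEq V] (φ : V → Option ℕ) (x y : V)
    (c : ℕ) : availCount C φ y ≤ availCount C (Function.update φ x (some c)) y + 1 := by
  set R : Set ℕ := {d | C.M y d x c}
  have hR : R.Subsingleton := fun d hd d' hd' =>
    C.matching x c y d d' (C.symm _ _ _ _ hd) (C.symm _ _ _ _ hd')
  have hsub : availColors C φ y \ R ⊆ availColors C (Function.update φ x (some c)) y := by
    rintro d ⟨⟨hdL, hd⟩, hdR⟩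
    refine ⟨hdL, fun v cv hv hM => ?_⟩
    rcases eq_or_ne v x with rfl | hvx
    · simp only [Function.update_self, Option.some_inj] at hv
      subst hv
      exact hdR hM
    · exact hd v cv (by rwa [Function.update_of_ne hvx] at hv) hM
  calc availCount C φ y ≤ (availColors C φ y \ R).ncard + R.ncard :=
        Set.ncard_le_ncard_sdiff_add_ncard _ _ hR.finite
    _ ≤ availCount C (Function.update φ x (some c)) y + 1 := by
        gcongr
        · exact Set.ncard_le_ncard hsub ((C.L y).finite_toSet.subset fun d hd => hd.1)
        · exact (Set.ncard_le_one_iff hR.finite).mpr fun ha hb => hR ha hb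

theorem pairwise_disjoint_extensionsOn_update [DecidableEq V] (φ : V → Option ℕ) {x : V}
    {T : Finset V} (hx : x ∉ T) :
    Pairwise (Disjoint on fun c => extensionsOn C (Function.update φ x (some c)) T) := by
  intro c c' hcc'
  refine Set.disjoint_left.mpr fun ψ hψ hψ' => hcc' ?_
  simpa [hψ.2.1 x hx] using hψ'.2.1 x hx

theorem pairwiseDisjoint_extensionsOn (T : Finset V) :
    {φ : V → Option ℕ | ∀ x ∈ T, φ x = none}.PairwiseDisjoint (extensionsOn C · T) := by
  intro φ hφ φ' hφ' hne
  refine Set.disjoint_left.mpr fun ψ hψ hψ' => hne (funext fun v => ?_)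
  by_cases hv : v ∈ T
  · rw [hφ v hv, hφ' v hv]
  · rw [← hψ.2.1 v hv, ← hψ'.2.1 v hv]

variable {C}

theorem IsPartialColoring.update_some [DecidableEq V] {φ : V → Option ℕ} {x : V} {c : ℕ}
    (hφ : IsPartialColoring C φ) (hc : c ∈ availColors C φ x) :
    IsPartialColoring C (Function.update φ x (some c)) := by
  have hloop : ∀ a i j, ¬ C.M a i a j := fun a i j h => G.loopless.irrefl a (C.adj_of _ _ _ _ h)
  refine ⟨fun v d hv => ?_, fun a b ca cb ha hb hM => ?_⟩
  · rcases eq_or_ne v x with rfl | hvx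
    · simp only [Function.update_self, Option.some_inj] at hv
      exact hv ▸ hc.1
    · exact hφ.1 v d (by rwa [Function.update_of_ne hvx] at hv)
  · rcases eq_or_ne a x with rfl | hax <;> rcases eq_or_ne b a with rfl | hba
    · exact hloop _ _ _ hM
    · simp only [Function.update_self, Option.some_inj] at ha
      rw [Function.update_of_ne hba] at hb
      exact hc.2 b cb hb (ha ▸ hM)
    · exact hloop _ _ _ hM
    · rw [Function.update_of_ne hax] at ha
      rcases eq_or_ne b x with rfl | hbx
      · simp only [Function.update_self, Option.some_inj] at hb
        exact hc.2 a ca ha (hb ▸ C.symm _ _ _ _ hM)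
      · exact hφ.2 a b ca cb ha (by rwa [Function.update_of_ne hbx] at hb) hM

theorem extensionsOn_update_subset [DecidableEq V] {φ : V → Option ℕ} {x : V} {T : Finset V}
    (hx : x ∉ T) (c : ℕ) :
    extensionsOn C (Function.update φ x (some c)) T ⊆ extensionsOn C φ (insert x T) := by
  rintro ψ ⟨hψ, hψφ, hψT⟩
  refine ⟨hψ, fun v hv => ?_, fun y hy => ?_⟩
  · rw [Finset.mem_insert, not_or] at hv
    rw [hψφ v hv.2, Function.update_of_ne hv.1]
  · rcases Finset.mem_insert.mp hy with rfl | hy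
    · simp [hψφ y hx]
    · exact hψT y hy

theorem factorial_card_le_ncard_extensionsOn [Finite V] [DecidableEq V] (T : Finset V) :
    ∀ {φ : V → Option ℕ}, IsPartialColoring C φ →
      (∀ x ∈ T, T.card ≤ availCount C φ x) →
      T.card.factorial ≤ (extensionsOn C φ T).ncard := by
  induction T using Finset.induction_on with
  | empty =>
    intro φ hφ _
    exact (Set.ncard_pos (extensionsOn_finite C φ ∅)).mpr
      ⟨φ, hφ, fun _ _ => rfl, by simp⟩
  | @insert x T hx ih =>
    intro φ hφ havail
    rw [Finset.card_insert_of_notMem hx] at havail ⊢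
    have hm (c : ℕ) (hc : c ∈ availColors C φ x) :
        T.card.factorial ≤ (extensionsOn C (Function.update φ x (some c)) T).ncard := by
      refine ih (hφ.update_some hc) fun y hy => ?_
      have := availCount_le_availCount_update_add_one C φ x y c
      have := havail y (Finset.mem_insert_of_mem hy)
      omega
    calc (T.card + 1).factorial = (T.card + 1) * T.card.factorial := Nat.factorial_succ _
      _ ≤ (availColors C φ x).ncard * T.card.factorial := by
          gcongr; exact havail x (Finset.mem_insert_self x T)
      _ ≤ (extensionsOn C φ (insert x T)).ncard :=
          Set.ncard_mul_le_ncard_of_pairwiseDisjoint (extensionsOn_finite C _ _)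
            (fun c _ => extensionsOn_update_subset hx c)
            ((pairwise_disjoint_extensionsOn_update C φ hx).set_pairwise _) hm

theorem ncard_mul_factorial_le_ncard [Finite V] {T : Finset V} {E B : Set (V → Option ℕ)}
    (hB : B.Finite)
    (hE : ∀ φ ∈ E, IsPartialColoring C φ ∧ (∀ x ∈ T, φ x = none) ∧
      ∀ x ∈ T, T.card ≤ availCount C φ x)
    (hEB : ∀ φ ∈ E, extensionsOn C φ T ⊆ B) : E.ncard * T.card.factorial ≤ B.ncard := by
  classical
  exact Set.ncard_mul_le_ncard_of_pairwiseDisjoint hB hEB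
    ((pairwiseDisjoint_extensionsOn C T).subset fun φ hφ => (hE φ hφ).2.1)
    fun φ hφ => factorial_card_le_ncard_extensionsOn T (hE φ hφ).1 (hE φ hφ).2.2

end RandomCorr

open RandomCorr

/-- (The conditional probability given that the restriction of `φ` to
`G − N[u]` equals `φ₀` is expressed as a ratio of counts: `Pr[B_S | ·] < 1/(8Δ³·C(Δ,s))`
becomes `8Δ³·C(Δ,s)·|B_S ∩ B| < |B|`, where `B` is the conditioning event; `φ₀` is a
partial coloring of `G − N[u]`, encoded as a partial coloring of `G` undefined on `N[u]`.)
For all sufficiently large `Δ`: if `u ∈ V(G)`, `S` is a set of neighbors of `u` of size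
`s = ⌈Δ^{7/12}⌉` and `φ₀` is a partial coloring of `G − N[u]`, then for a uniformly
random partial `(L,M)`-coloring `φ` of `G`, conditioned on its restriction to `G − N[u]`
being `φ₀`, the probability that `S ∩ dom(φ) = ∅` and `A_x` fails for all `x ∈ S` is less
than `1/(8Δ³·C(Δ,s))`. -/
theorem eventBS_unlikely_conditional :
    ∃ Δ₀ : ℕ, ∀ Δ : ℕ, Δ₀ ≤ Δ →
      ∀ (V : Type) [Fintype V] (G : SimpleGraph V)
        (C : RandomCorr.CorrAssignment G) (u : V) (S : Finset V),
        (∀ x ∈ S, G.Adj u x) → S.card = ⌈(Δ : ℝ) ^ ((7 : ℝ)/12)⌉₊ →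
        ∀ φ₀ : V → Option ℕ,
          RandomCorr.IsPartialColoring C φ₀ →
          (∀ v : V, v = u ∨ G.Adj u v → φ₀ v = none) →
          8 * Δ ^ 3 * Δ.choose ⌈(Δ : ℝ) ^ ((7 : ℝ)/12)⌉₊ *
            Set.ncard {φ : V → Option ℕ | RandomCorr.IsPartialColoring C φ ∧
              (∀ v : V, ¬(v = u ∨ G.Adj u v) → φ v = φ₀ v) ∧
              (∀ x ∈ S, φ x = none) ∧
              (∀ x ∈ S, ¬ RandomCorr.EventA C Δ x φ)} <
          Set.ncard {φ : V → Option ℕ | RandomCorr.IsPartialColoring C φ ∧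
            (∀ v : V, ¬(v = u ∨ G.Adj u v) → φ v = φ₀ v)} := by
  refine ⟨9 ^ 12, fun Δ hΔ V _ G C u S hS hScard φ₀ hφ₀ _ => ?_⟩
  set B := {φ : V → Option ℕ | IsPartialColoring C φ ∧
    (∀ v : V, ¬(v = u ∨ G.Adj u v) → φ v = φ₀ v)}
  set E := {φ : V → Option ℕ | IsPartialColoring C φ ∧
    (∀ v : V, ¬(v = u ∨ G.Adj u v) → φ v = φ₀ v) ∧
    (∀ x ∈ S, φ x = none) ∧ (∀ x ∈ S, ¬ EventA C Δ x φ)}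
  have hB : B.Finite := (setOf_isPartialColoring_finite C).subset fun _ hφ => hφ.1
  have hcount : E.ncard * S.card.factorial ≤ B.ncard := by
    refine ncard_mul_factorial_le_ncard hB (fun φ hφ => ⟨hφ.1, hφ.2.2.1, fun x hx => ?_⟩)
      fun φ hφ ψ hψ => ⟨hψ.1, fun v hv => ?_⟩
    · rw [hScard, Nat.ceil_le, ← not_lt]
      exact fun hlt => hφ.2.2.2 x hx ⟨hφ.2.2.1 x hx, hlt⟩
    · rw [hψ.2.1 v fun hvS => hv (Or.inr (hS v hvS))]
      exact hφ.2.1 v hv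
  have hB0 : 0 < B.ncard := (Set.ncard_pos hB).mpr ⟨φ₀, hφ₀, fun _ _ => rfl⟩
  have hnum := eight_mul_pow_three_mul_choose_ceil_lt_factorial hΔ
  rw [hScard] at hcount
  rcases Nat.eq_zero_or_pos E.ncard with hE0 | hE0
  · simpa [hE0] using hB0
  · calc _ < _ * E.ncard := Nat.mul_lt_mul_of_pos_right hnum hE0
      _ ≤ B.ncard := by rwa [mul_comm]
end
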